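/- Let k be a commutative ring, A a k-algebra, D a k-coalgebra and ψ : D ⊗ A → A ⊗ D (written ψ(d ⊗ a) = Σ a_ψ ⊗ d^ψ) an entwining map, i.e. satisfying: ψ(d ⊗ ab) = Σ a_ψ b_φ ⊗ d^{ψφ}; ψ(d ⊗ 1) = 1 ⊗ d; Σ a_ψ ⊗ Δ(d^ψ) = Σ a_{ψφ} ⊗ d₍₁₎^φ ⊗ d₍₂₎^ψ; and Σ a_ψ ε(d^ψ) = ε(d)a. Then A ⊗ D is an A-coring: it is an A-bimodule via a'(a ⊗ d)a'' = Σ a'a a''_ψ ⊗ d^ψ, and the maps Δ_C(a ⊗ d) = Σ (a ⊗ d₍₁₎) ⊗_A (1 ⊗ d₍₂₎) and ε_C(a ⊗ d) = a ε(d) make it a coassociative counital comonoid in the category of A-bimodules. -/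

import Mathlib

/-!
The right action `(a ⊗ d) · b = a ψ(d ⊗ b)` is unital and associative because `ψ` respects the
unit and the multiplication of `A`, and it commutes with left multiplication by associativity of
`A`. The coproduct `A ⊗ Δ` and the counit `A ⊗ ε` are evidently left `A`-linear, and right
`A`-linear by the compatibilities of `ψ` with `Δ` and `ε`. Coassociativity and counitality are
those of `D`, tensored with `A` and moved along the associators (the pentagon identity).
-/

open TensorProduct

noncomputable section

variable {k A D : Type*} [CommRing k] [Ring A] [Algebra k A]
  [AddCommGroup D] [Module k D] [Coalgebra k D]

/-- `ψ : D ⊗ A → A ⊗ D` is an entwining map. -/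
def IsEntwining (ψ : D ⊗[k] A →ₗ[k] A ⊗[k] D) : Prop :=
  -- `ψ (d ⊗ ab) = ∑ a_ψ b_φ ⊗ d^{ψφ}`
  (ψ ∘ₗ (LinearMap.mul' k A).lTensor D =
    (LinearMap.mul' k A).rTensor D ∘ₗ (TensorProduct.assoc k A A D).symm.toLinearMap ∘ₗ
      ψ.lTensor A ∘ₗ (TensorProduct.assoc k A D A).toLinearMap ∘ₗ
        ψ.rTensor A ∘ₗ (TensorProduct.assoc k D A A).symm.toLinearMap) ∧
  -- `ψ (d ⊗ 1) = 1 ⊗ d`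
  (∀ d : D, ψ (d ⊗ₜ[k] (1 : A)) = (1 : A) ⊗ₜ[k] d) ∧
  -- `∑ a_ψ ⊗ Δ (d^ψ) = ∑ a_{ψφ} ⊗ d₍₁₎^φ ⊗ d₍₂₎^ψ`
  ((Coalgebra.comul (R := k) (A := D)).lTensor A ∘ₗ ψ =
    (TensorProduct.assoc k A D D).toLinearMap ∘ₗ ψ.rTensor D ∘ₗ
      (TensorProduct.assoc k D A D).symm.toLinearMap ∘ₗ ψ.lTensor D ∘ₗ
        (TensorProduct.assoc k D D A).toLinearMap ∘ₗ
          (Coalgebra.comul (R := k) (A := D)).rTensor A) ∧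
  -- `∑ a_ψ ε(d^ψ) = ε(d) a`
  ((TensorProduct.rid k A).toLinearMap ∘ₗ
      (Coalgebra.counit (R := k) (A := D)).lTensor A ∘ₗ ψ =
    (TensorProduct.lid k A).toLinearMap ∘ₗ (Coalgebra.counit (R := k) (A := D)).rTensor A)

/-- The right `A`-action on `A ⊗ D` induced by an entwining map:
`(a ⊗ d) · a' = ∑ a a'_ψ ⊗ d^ψ`. -/
def rmap (ψ : D ⊗[k] A →ₗ[k] A ⊗[k] D) : (A ⊗[k] D) ⊗[k] A →ₗ[k] A ⊗[k] D :=
  (LinearMap.mul' k A).rTensor D ∘ₗ (TensorProduct.assoc k A A D).symm.toLinearMap ∘ₗ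
    ψ.lTensor A ∘ₗ (TensorProduct.assoc k A D A).toLinearMap

/-- The coproduct `A ⊗ Δ` of the coring `A ⊗ D` (in the model
`(A ⊗ D) ⊗_A (A ⊗ D) ≅ (A ⊗ D) ⊗ D`). -/
def corComul : A ⊗[k] D →ₗ[k] (A ⊗[k] D) ⊗[k] D :=
  (TensorProduct.assoc k A D D).symm.toLinearMap ∘ₗ
    (Coalgebra.comul (R := k) (A := D)).lTensor A

/-- The counit `A ⊗ ε` of the coring `A ⊗ D`. -/
def corCounit : A ⊗[k] D →ₗ[k] A :=
  (TensorProduct.rid k A).toLinearMap ∘ₗ (Coalgebra.counit (R := k) (A := D)).lTensor A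

/-- The right `A`-action on `(A ⊗ D) ⊗ D ≅ (A ⊗ D) ⊗_A (A ⊗ D)`. -/
def rmap2 (ψ : D ⊗[k] A →ₗ[k] A ⊗[k] D) :
    ((A ⊗[k] D) ⊗[k] D) ⊗[k] A →ₗ[k] (A ⊗[k] D) ⊗[k] D :=
  (rmap ψ).rTensor D ∘ₗ (TensorProduct.assoc k (A ⊗[k] D) A D).symm.toLinearMap ∘ₗ
    ψ.lTensor (A ⊗[k] D) ∘ₗ (TensorProduct.assoc k (A ⊗[k] D) D A).toLinearMap

section TensorLemmas

variable {R S M N P Q : Type*} [CommSemiring R] [Semiring S] [Algebra R S]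
  [AddCommMonoid M] [Module R M] [AddCommMonoid N] [Module R N]
  [AddCommMonoid P] [Module R P] [AddCommMonoid Q] [Module R Q]

theorem LinearMap.rTensor_mul'_assoc_symm_tmul (a : S) (x : S ⊗[R] M) :
    (LinearMap.mul' R S).rTensor M ((TensorProduct.assoc R S S M).symm (a ⊗ₜ x)) =
      (LinearMap.mulLeft R a).rTensor M x := by
  induction x using TensorProduct.induction_on with
  | zero => simp
  | tmul b m => simp
  | add x y hx hy => simp [tmul_add, hx, hy]

theorem LinearMap.rTensor_mulLeft_rTensor_mulLeft (a b : S) (x : S ⊗[R] M) :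
    (LinearMap.mulLeft R a).rTensor M ((LinearMap.mulLeft R b).rTensor M x) =
      (LinearMap.mulLeft R (a * b)).rTensor M x := by
  rw [LinearMap.mulLeft_mul, LinearMap.rTensor_comp_apply]

theorem LinearMap.rTensor_rTensor_assoc_symm_tmul (f : M →ₗ[R] Q) (m : M) (y : N ⊗[R] P) :
    (f.rTensor N).rTensor P ((TensorProduct.assoc R M N P).symm (m ⊗ₜ y)) =
      (TensorProduct.assoc R Q N P).symm (f m ⊗ₜ y) := by
  induction y using TensorProduct.induction_on with
  | zero => simp
  | tmul n p => simp
  | add x y hx hy => simp [tmul_add, hx, hy]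

end TensorLemmas

section Coring

open Coalgebra

variable {ψ : D ⊗[k] A →ₗ[k] A ⊗[k] D}

omit [Coalgebra k D] in
theorem rmap_tmul_tmul (a : A) (d : D) (b : A) :
    rmap ψ ((a ⊗ₜ[k] d) ⊗ₜ[k] b) = (LinearMap.mulLeft k a).rTensor D (ψ (d ⊗ₜ[k] b)) := by
  simp [rmap, LinearMap.rTensor_mul'_assoc_symm_tmul]

theorem IsEntwining.rmap_map_tmul (hψ : IsEntwining ψ) (d : D) (a b : A) :
    rmap ψ (ψ (d ⊗ₜ[k] a) ⊗ₜ[k] b) = ψ (d ⊗ₜ[k] (a * b)) := by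
  simpa [rmap] using (LinearMap.congr_fun hψ.1 (d ⊗ₜ[k] (a ⊗ₜ[k] b))).symm

theorem IsEntwining.corComul_map_tmul (hψ : IsEntwining ψ) (d : D) (a : A) :
    corComul (ψ (d ⊗ₜ[k] a)) =
      ψ.rTensor D ((TensorProduct.assoc k D A D).symm
        (ψ.lTensor D (TensorProduct.assoc k D D A (comul (R := k) d ⊗ₜ[k] a)))) := by
  simpa [corComul] using congr((TensorProduct.assoc k A D D).symm
    $(LinearMap.congr_fun hψ.2.2.1 (d ⊗ₜ[k] a)))

theorem IsEntwining.corCounit_map_tmul (hψ : IsEntwining ψ) (d : D) (a : A) :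
    corCounit (ψ (d ⊗ₜ[k] a)) = counit (R := k) d • a := by
  simpa [corCounit] using LinearMap.congr_fun hψ.2.2.2 (d ⊗ₜ[k] a)

theorem IsEntwining.rmap_tmul_one (hψ : IsEntwining ψ) (x : A ⊗[k] D) :
    rmap ψ (x ⊗ₜ[k] (1 : A)) = x := by
  induction x using TensorProduct.induction_on with
  | zero => simp
  | tmul a d => simp [rmap_tmul_tmul, hψ.2.1]
  | add x y hx hy => simp [add_tmul, hx, hy]

omit [Coalgebra k D] in
theorem rmap_rTensor_mulLeft_tmul (a b : A) (x : A ⊗[k] D) :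
    rmap ψ ((LinearMap.mulLeft k a).rTensor D x ⊗ₜ[k] b) =
      (LinearMap.mulLeft k a).rTensor D (rmap ψ (x ⊗ₜ[k] b)) := by
  induction x using TensorProduct.induction_on with
  | zero => simp
  | tmul c d => simp [rmap_tmul_tmul, LinearMap.rTensor_mulLeft_rTensor_mulLeft]
  | add x y hx hy => simp [add_tmul, hx, hy]

theorem IsEntwining.rmap_rmap (hψ : IsEntwining ψ) (x : A ⊗[k] D) (a b : A) :
    rmap ψ (rmap ψ (x ⊗ₜ[k] a) ⊗ₜ[k] b) = rmap ψ (x ⊗ₜ[k] (a * b)) := by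
  induction x using TensorProduct.induction_on with
  | zero => simp
  | tmul c d =>
    rw [rmap_tmul_tmul, rmap_rTensor_mulLeft_tmul, hψ.rmap_map_tmul, rmap_tmul_tmul]
  | add x y hx hy => simp only [add_tmul, map_add, hx, hy]

theorem corComul_tmul (a : A) (d : D) :
    corComul (a ⊗ₜ[k] d) = (TensorProduct.assoc k A D D).symm (a ⊗ₜ[k] comul (R := k) d) := by
  simp [corComul]

theorem corComul_rTensor_mulLeft (a : A) (x : A ⊗[k] D) :
    corComul ((LinearMap.mulLeft k a).rTensor D x) =
      ((LinearMap.mulLeft k a).rTensor D).rTensor D (corComul x) := by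
  induction x using TensorProduct.induction_on with
  | zero => simp
  | tmul b d => simp [corComul_tmul, LinearMap.rTensor_rTensor_assoc_symm_tmul]
  | add x y hx hy => simp [hx, hy]

omit [Coalgebra k D] in
theorem rTensor_rmap_assoc_symm_tmul (a : A) (d : D) (x : A ⊗[k] D) :
    (rmap ψ).rTensor D ((TensorProduct.assoc k (A ⊗[k] D) A D).symm ((a ⊗ₜ[k] d) ⊗ₜ[k] x)) =
      ((LinearMap.mulLeft k a).rTensor D).rTensor D
        (ψ.rTensor D ((TensorProduct.assoc k D A D).symm (d ⊗ₜ[k] x))) := by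
  induction x using TensorProduct.induction_on with
  | zero => simp
  | tmul b e => simp [rmap_tmul_tmul]
  | add x y hx hy => simp [tmul_add, hx, hy]

omit [Coalgebra k D] in
theorem rmap2_assoc_symm_tmul_tmul (a : A) (y : D ⊗[k] D) (b : A) :
    rmap2 ψ ((TensorProduct.assoc k A D D).symm (a ⊗ₜ[k] y) ⊗ₜ[k] b) =
      ((LinearMap.mulLeft k a).rTensor D).rTensor D
        (ψ.rTensor D ((TensorProduct.assoc k D A D).symm
          (ψ.lTensor D (TensorProduct.assoc k D D A (y ⊗ₜ[k] b))))) := by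
  induction y using TensorProduct.induction_on with
  | zero => simp [rmap2]
  | tmul d e => simpa [rmap2] using rTensor_rmap_assoc_symm_tmul a d (ψ (e ⊗ₜ[k] b))
  | add x y hx hy => simp only [add_tmul, tmul_add, map_add, hx, hy]

theorem IsEntwining.corComul_rmap (hψ : IsEntwining ψ) (x : A ⊗[k] D) (a : A) :
    corComul (rmap ψ (x ⊗ₜ[k] a)) = rmap2 ψ (corComul x ⊗ₜ[k] a) := by
  induction x using TensorProduct.induction_on with
  | zero => simp [rmap2]
  | tmul b d =>
    rw [rmap_tmul_tmul, corComul_rTensor_mulLeft, hψ.corComul_map_tmul, corComul_tmul,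
      rmap2_assoc_symm_tmul_tmul]
  | add x y hx hy => simp only [add_tmul, map_add, hx, hy]

open LinearMap in
theorem rTensor_corComul_comp_corComul :
    (corComul (k := k) (A := A) (D := D)).rTensor D ∘ₗ corComul =
      (TensorProduct.assoc k (A ⊗[k] D) D D).symm.toLinearMap ∘ₗ
        (comul (R := k) (A := D)).lTensor (A ⊗[k] D) ∘ₗ corComul := by
  have pentagon :
      ((TensorProduct.assoc k A D D).symm.toLinearMap.rTensor D ∘ₗ
          (TensorProduct.assoc k A (D ⊗[k] D) D).symm.toLinearMap) ∘ₗ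
            ((TensorProduct.assoc k D D D).symm.toLinearMap).lTensor A =
        (TensorProduct.assoc k (A ⊗[k] D) D D).symm.toLinearMap ∘ₗ
          (TensorProduct.assoc k A D (D ⊗[k] D)).symm.toLinearMap := by
    ext; rfl
  calc _ = (TensorProduct.assoc k A D D).symm.toLinearMap.rTensor D ∘ₗ
          (TensorProduct.assoc k A (D ⊗[k] D) D).symm.toLinearMap ∘ₗ
            ((comul (R := k) (A := D)).rTensor D ∘ₗ comul).lTensor A := by
        simp only [corComul, rTensor_comp, lTensor_comp, comp_assoc]
        congr 1
        rw [← comp_assoc, rTensor_lTensor_comp_assoc_symm, comp_assoc]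
    _ = (TensorProduct.assoc k (A ⊗[k] D) D D).symm.toLinearMap ∘ₗ
          (TensorProduct.assoc k A D (D ⊗[k] D)).symm.toLinearMap ∘ₗ
            ((comul (R := k) (A := D)).lTensor D ∘ₗ comul).lTensor A := by
        simp only [← coassoc_symm, lTensor_comp, ← comp_assoc, pentagon]
    _ = _ := by
        simp only [corComul, lTensor_tensor, lTensor_comp, comp_assoc,
          LinearEquiv.comp_symm_assoc]

theorem corCounit_tmul (a : A) (d : D) : corCounit (a ⊗ₜ[k] d) = counit (R := k) d • a := by
  simp [corCounit]

theorem corCounit_rTensor_mulLeft (a : A) (x : A ⊗[k] D) :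
    corCounit ((LinearMap.mulLeft k a).rTensor D x) = a * corCounit x := by
  induction x using TensorProduct.induction_on with
  | zero => simp
  | tmul b d => simp [corCounit_tmul]
  | add x y hx hy => simp [hx, hy, mul_add]

theorem IsEntwining.corCounit_rmap (hψ : IsEntwining ψ) (x : A ⊗[k] D) (a : A) :
    corCounit (rmap ψ (x ⊗ₜ[k] a)) = corCounit x * a := by
  induction x using TensorProduct.induction_on with
  | zero => simp
  | tmul b d =>
    rw [rmap_tmul_tmul, corCounit_rTensor_mulLeft, hψ.corCounit_map_tmul, corCounit_tmul,
      mul_smul_comm, smul_mul_assoc]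
  | add x y hx hy => simp only [add_tmul, map_add, hx, hy, add_mul]

open LinearMap in
theorem rTensor_corCounit_comp_corComul :
    (corCounit (k := k) (A := A) (D := D)).rTensor D ∘ₗ corComul = LinearMap.id := by
  simp only [corCounit, corComul, rTensor_comp, comp_assoc]
  rw [← comp_assoc (h := rTensor D (lTensor A counit)), rTensor_lTensor_comp_assoc_symm,
    comp_assoc, ← lTensor_comp, rTensor_counit_comp_comul]
  ext
  simp

open LinearMap in
theorem IsEntwining.rmap_comp_lTensor_counit_comp_corComul (hψ : IsEntwining ψ) :
    rmap ψ ∘ₗ (Algebra.linearMap k A ∘ₗ counit (R := k) (A := D)).lTensor (A ⊗[k] D) ∘ₗ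
      corComul = LinearMap.id := by
  simp only [corComul, lTensor_tensor, comp_assoc, LinearEquiv.comp_symm_assoc]
  ext
  simp [lTensor_comp_apply, hψ.rmap_tmul_one]

end Coring

theorem stmt_15 (ψ : D ⊗[k] A →ₗ[k] A ⊗[k] D) (hψ : IsEntwining ψ) :
    -- `A ⊗ D` is an `A`-bimodule: the right action is unital, associative and
    -- commutes with the left action (left multiplication on the first factor)
    (∀ x : A ⊗[k] D, rmap ψ (x ⊗ₜ[k] (1 : A)) = x) ∧
    (∀ (x : A ⊗[k] D) (a b : A),
      rmap ψ (rmap ψ (x ⊗ₜ[k] a) ⊗ₜ[k] b) = rmap ψ (x ⊗ₜ[k] (a * b))) ∧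
    (∀ (a b : A) (x : A ⊗[k] D),
      (LinearMap.mulLeft k a).rTensor D ((LinearMap.mulLeft k b).rTensor D x) =
        (LinearMap.mulLeft k (a * b)).rTensor D x) ∧
    (∀ (a b : A) (x : A ⊗[k] D),
      rmap ψ (((LinearMap.mulLeft k a).rTensor D x) ⊗ₜ[k] b) =
        (LinearMap.mulLeft k a).rTensor D (rmap ψ (x ⊗ₜ[k] b))) ∧
    -- the coproduct is `A`-bilinear
    (∀ (a : A) (x : A ⊗[k] D),
      corComul ((LinearMap.mulLeft k a).rTensor D x) =
        ((LinearMap.mulLeft k a).rTensor D).rTensor D (corComul x)) ∧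
    (∀ (x : A ⊗[k] D) (a : A),
      corComul (rmap ψ (x ⊗ₜ[k] a)) = rmap2 ψ ((corComul x) ⊗ₜ[k] a)) ∧
    -- the coproduct is coassociative
    (corComul.rTensor D ∘ₗ (corComul (k := k) (A := A) (D := D)) =
      (TensorProduct.assoc k (A ⊗[k] D) D D).symm.toLinearMap ∘ₗ
        (Coalgebra.comul (R := k) (A := D)).lTensor (A ⊗[k] D) ∘ₗ corComul) ∧
    -- the counit is `A`-bilinear and counital
    (∀ (a : A) (x : A ⊗[k] D),
      corCounit ((LinearMap.mulLeft k a).rTensor D x) = a * corCounit x) ∧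
    (∀ (x : A ⊗[k] D) (a : A), corCounit (rmap ψ (x ⊗ₜ[k] a)) = corCounit x * a) ∧
    (corCounit.rTensor D ∘ₗ (corComul (k := k) (A := A) (D := D)) = LinearMap.id) ∧
    (rmap ψ ∘ₗ
        ((Algebra.linearMap k A ∘ₗ Coalgebra.counit (R := k) (A := D)).lTensor
          (A ⊗[k] D)) ∘ₗ corComul = LinearMap.id) := by
  exact ⟨hψ.rmap_tmul_one, hψ.rmap_rmap, LinearMap.rTensor_mulLeft_rTensor_mulLeft,
    rmap_rTensor_mulLeft_tmul, corComul_rTensor_mulLeft, hψ.corComul_rmap,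
    rTensor_corComul_comp_corComul, corCounit_rTensor_mulLeft, hψ.corCounit_rmap,
    rTensor_corCounit_comp_corComul, hψ.rmap_comp_lTensor_counit_comp_corComul⟩
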